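/- arXiv:0805.2235 — 2 statements merged into one kernel-verified Lean document; each statement's English description precedes it below -/
import Mathlib

section
/- If u is a C^∞ solution of Δu = e^{2u} on a domain G (so λ = e^u is the density of a curvature -1 metric), then the function 2[∂²u/∂z² − (∂u/∂z)²] is holomorphic on G. -/
open Complex

/-- Partial derivative in the real coordinate direction. -/
noncomputable def pdx (f : ℂ → ℂ) (z : ℂ) : ℂ :=
  deriv (fun t : ℝ => f (z + (t : ℂ))) 0

/-- Partial derivative in the imaginary coordinate direction. -/
noncomputable def pdy (f : ℂ → ℂ) (z : ℂ) : ℂ :=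
  deriv (fun t : ℝ => f (z + (t : ℂ) * Complex.I)) 0

/-- Wirtinger derivative `∂/∂z = (1/2)(∂/∂x − i ∂/∂y)`. -/
noncomputable def wderiv (f : ℂ → ℂ) (z : ℂ) : ℂ :=
  (pdx f z - Complex.I * pdy f z) / 2

/-- The Laplacian of `u : ℂ → ℝ` at `z`: sum of second derivatives in the
real and imaginary coordinate directions. -/
noncomputable def lap (u : ℂ → ℝ) (z : ℂ) : ℝ :=
  iteratedDeriv 2 (fun t : ℝ => u (z + (t : ℂ))) 0 +
    iteratedDeriv 2 (fun t : ℝ => u (z + (t : ℂ) * Complex.I)) 0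

section helpers

lemma line_hasDerivAt {E : Type*} [NormedAddCommGroup E] [NormedSpace ℝ E]
    {f : ℂ → E} (z v : ℂ) {t₀ : ℝ} (hf : DifferentiableAt ℝ f (z + t₀ * v)) :
    HasDerivAt (fun t : ℝ => f (z + t * v)) (fderiv ℝ f (z + t₀ * v) v) t₀ := by
  have hline : HasDerivAt (fun t : ℝ => z + (t : ℂ) * v) v t₀ := by
    simpa using ((Complex.ofRealCLM.hasDerivAt (x := t₀)).mul_const v).const_add z
  simpa [Function.comp_def] using hf.hasFDerivAt.comp_hasDerivAt t₀ hline

lemma pdx_eq {f : ℂ → ℂ} {z : ℂ} (hf : DifferentiableAt ℝ f z) :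
    pdx f z = fderiv ℝ f z 1 := by
  have h := line_hasDerivAt (f := f) z 1 (t₀ := 0) (by simpa using hf)
  have : deriv (fun t : ℝ => f (z + t * 1)) 0 = fderiv ℝ f (z + 0 * 1) 1 := h.deriv
  simpa [pdx] using this

lemma pdy_eq {f : ℂ → ℂ} {z : ℂ} (hf : DifferentiableAt ℝ f z) :
    pdy f z = fderiv ℝ f z Complex.I := by
  have h := line_hasDerivAt (f := f) z Complex.I (t₀ := 0) (by simpa using hf)
  have : deriv (fun t : ℝ => f (z + t * Complex.I)) 0 = fderiv ℝ f (z + 0 * Complex.I) Complex.I :=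
    h.deriv
  simpa [pdy] using this

lemma wderiv_eq {f : ℂ → ℂ} {z : ℂ} (hf : DifferentiableAt ℝ f z) :
    wderiv f z = (fderiv ℝ f z 1 - Complex.I * fderiv ℝ f z Complex.I) / 2 := by
  rw [wderiv, pdx_eq hf, pdy_eq hf]

lemma wderiv_congr {f g : ℂ → ℂ} {z : ℂ} (h : f =ᶠ[nhds z] g) : wderiv f z = wderiv g z := by
  have hx : ∀ v : ℂ, Filter.Tendsto (fun t : ℝ => z + (t : ℂ) * v) (nhds 0) (nhds z) := by
    intro v
    have : Continuous (fun t : ℝ => z + (t : ℂ) * v) := by continuity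
    simpa using this.tendsto 0
  have h1 : (fun t : ℝ => f (z + (t : ℂ))) =ᶠ[nhds (0 : ℝ)] fun t : ℝ => g (z + (t : ℂ)) := by
    simpa [Function.comp_def] using h.comp_tendsto (by simpa using hx 1)
  have h2 : (fun t : ℝ => f (z + (t : ℂ) * Complex.I)) =ᶠ[nhds (0 : ℝ)]
      fun t : ℝ => g (z + (t : ℂ) * Complex.I) := h.comp_tendsto (hx Complex.I)
  simp [wderiv, pdx, pdy, h1.deriv_eq, h2.deriv_eq]

lemma hasFDerivAt_clm_apply_const {c : ℂ → ℂ →L[ℝ] ℂ} {z w : ℂ}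
    (hc : DifferentiableAt ℝ c z) :
    HasFDerivAt (fun y => c y w) ((fderiv ℝ c z).flip w) z := by
  have := hc.hasFDerivAt.clm_apply (hasFDerivAt_const w z)
  simpa using this

lemma differentiableAt_complex_of_cr {f : ℂ → ℂ} {z : ℂ} (hf : DifferentiableAt ℝ f z)
    (hCR : fderiv ℝ f z Complex.I = Complex.I * fderiv ℝ f z 1) :
    DifferentiableAt ℂ f z := by
  rw [differentiableAt_iff_restrictScalars ℝ hf]
  refine ⟨(fderiv ℝ f z 1) • (1 : ℂ →L[ℂ] ℂ), ?_⟩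
  apply ContinuousLinearMap.ext
  intro v
  have hv : v = (v.re : ℝ) • (1 : ℂ) + (v.im : ℝ) • Complex.I := by
    simp [Complex.real_smul, Complex.re_add_im]
  conv_lhs => rw [hv]
  conv_rhs => rw [hv]
  rw [map_add, map_add, map_smul, map_smul, map_smul, map_smul]
  simp only [ContinuousLinearMap.coe_restrictScalars', ContinuousLinearMap.smul_apply,
    ContinuousLinearMap.one_apply, smul_eq_mul, Complex.real_smul, hCR]
  ring

end helpers

section lap

variable {u : ℂ → ℝ} {G : Set ℂ}

lemma tendsto_line (z v : ℂ) : Filter.Tendsto (fun t : ℝ => z + (t : ℂ) * v)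
    (nhds 0) (nhds z) := by
  have : Continuous (fun t : ℝ => z + (t : ℂ) * v) := by continuity
  simpa using this.tendsto 0

lemma fderiv_ofReal_comp {w : ℂ} (hu : DifferentiableAt ℝ u w) (v : ℂ) :
    ((fderiv ℝ u w v : ℝ) : ℂ) = fderiv ℝ (fun x => (u x : ℂ)) w v := by
  have : HasFDerivAt (fun x => (u x : ℂ)) (Complex.ofRealCLM.comp (fderiv ℝ u w)) w :=
    Complex.ofRealCLM.hasFDerivAt.comp w hu.hasFDerivAt
  rw [this.fderiv]
  simp

lemma lap_line (hG : IsOpen G) (hu : ContDiffOn ℝ (⊤ : ℕ∞) u G) {z : ℂ} (hz : z ∈ G) (v : ℂ) :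
    ((iteratedDeriv 2 (fun t : ℝ => u (z + (t : ℂ) * v)) 0 : ℝ) : ℂ)
      = fderiv ℝ (fderiv ℝ (fun w => (u w : ℂ))) z v v := by
  set uc : ℂ → ℂ := fun w => (u w : ℂ) with huc
  set F : ℂ → ℂ →L[ℝ] ℂ := fderiv ℝ uc with hF
  have hud : ∀ y ∈ G, DifferentiableAt ℝ u y := fun y hy =>
    ((hu y hy).differentiableWithinAt (by simp)).differentiableAt
      (hG.mem_nhds hy)
  have hucc : ContDiffOn ℝ (⊤ : ℕ∞) uc G := Complex.ofRealCLM.contDiff.comp_contDiffOn hu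
  have hFc : ContDiffOn ℝ (⊤ : ℕ∞) F G := hucc.fderiv_of_isOpen hG (by simp)
  have hFd : DifferentiableAt ℝ (fun w => F w v) z := by
    have : DifferentiableAt ℝ F z :=
      ((hFc.contDiffAt (hG.mem_nhds hz)).differentiableAt (by simp))
    exact this.clm_apply (differentiableAt_const v)
  have ruvc : ContDiffOn ℝ (⊤ : ℕ∞) (fun w => fderiv ℝ u w) G := hu.fderiv_of_isOpen hG (by simp)
  set ruv : ℂ → ℝ := fun w => fderiv ℝ u w v with hruv
  have hruvd : DifferentiableAt ℝ ruv z := by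
    have : DifferentiableAt ℝ (fun w => fderiv ℝ u w) z :=
      (ruvc.contDiffAt (hG.mem_nhds hz)).differentiableAt (by simp)
    exact this.clm_apply (differentiableAt_const v)
  have hev : ∀ᶠ s : ℝ in nhds 0, z + (s : ℂ) * v ∈ G :=
    (tendsto_line z v).eventually (hG.eventually_mem hz)
  set g : ℝ → ℝ := fun t => u (z + (t : ℂ) * v) with hg
  -- first derivative along the line
  have hderiv_g : ∀ᶠ s : ℝ in nhds 0, deriv g s = ruv (z + (s : ℂ) * v) := by
    filter_upwards [hev] with s hs
    exact (line_hasDerivAt z v (hud _ hs)).deriv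
  -- second derivative: real version
  have hline0 : (z + ((0 : ℝ) : ℂ) * v) = z := by simp
  have h1 : HasDerivAt (deriv g) (fderiv ℝ ruv z v) 0 := by
    have := line_hasDerivAt (f := ruv) z v (t₀ := 0) (by rwa [hline0])
    rw [hline0] at this
    exact this.congr_of_eventuallyEq hderiv_g
  have h2 : HasDerivAt (fun s : ℝ => ((deriv g s : ℝ) : ℂ)) ((fderiv ℝ ruv z v : ℝ) : ℂ) 0 :=
    h1.ofReal_comp
  have h3 : HasDerivAt (fun s : ℝ => F (z + (s : ℂ) * v) v)
      (fderiv ℝ (fun w => F w v) z v) 0 := by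
    have := line_hasDerivAt (f := fun w => F w v) z v (t₀ := 0) (by rwa [hline0])
    rwa [hline0] at this
  have h4 : (fun s : ℝ => ((deriv g s : ℝ) : ℂ)) =ᶠ[nhds (0 : ℝ)]
      (fun s : ℝ => F (z + (s : ℂ) * v) v) := by
    filter_upwards [hev, hderiv_g] with s hs hds
    rw [hds, hruv]
    exact fderiv_ofReal_comp (hud _ hs) v
  have h5 : HasDerivAt (fun s : ℝ => F (z + (s : ℂ) * v) v) ((fderiv ℝ ruv z v : ℝ) : ℂ) 0 :=
    h2.congr_of_eventuallyEq h4.symm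
  have h6 : ((fderiv ℝ ruv z v : ℝ) : ℂ) = fderiv ℝ (fun w => F w v) z v := h5.unique h3
  have h7 : iteratedDeriv 2 g 0 = fderiv ℝ ruv z v := by
    rw [show (2 : ℕ) = 1 + 1 from rfl, iteratedDeriv_succ, iteratedDeriv_one]
    exact h1.deriv
  rw [h7, h6]
  have hclm : DifferentiableAt ℝ F z :=
    (hFc.contDiffAt (hG.mem_nhds hz)).differentiableAt (by simp)
  rw [(hasFDerivAt_clm_apply_const (w := v) hclm).fderiv]
  rfl

lemma lap_eq (hG : IsOpen G) (hu : ContDiffOn ℝ (⊤ : ℕ∞) u G) {z : ℂ} (hz : z ∈ G) :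
    ((lap u z : ℝ) : ℂ) = fderiv ℝ (fderiv ℝ (fun w => (u w : ℂ))) z 1 1
      + fderiv ℝ (fderiv ℝ (fun w => (u w : ℂ))) z Complex.I Complex.I := by
  have e1 : (fun t : ℝ => u (z + (t : ℂ))) = fun t : ℝ => u (z + (t : ℂ) * 1) := by
    funext t; simp
  rw [lap, e1, Complex.ofReal_add, lap_line hG hu hz 1, lap_line hG hu hz Complex.I]

end lap

lemma HasFDerivAt.div_const' {f : ℂ → ℂ} {f' : ℂ →L[ℝ] ℂ} {x : ℂ}
    (hd : HasFDerivAt f f' x) (c : ℂ) :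
    HasFDerivAt (fun y => f y / c) (c⁻¹ • f') x :=
  (hd.const_mul c⁻¹).congr_of_eventuallyEq
    (Filter.Eventually.of_forall fun y => div_eq_inv_mul (f y) c)

lemma ContDiffOn.diffAt {E : Type*} [NormedAddCommGroup E] [NormedSpace ℝ E]
    {f : ℂ → E} {G : Set ℂ} (hf : ContDiffOn ℝ (⊤ : ℕ∞) f G) (hG : IsOpen G) {z : ℂ}
    (hz : z ∈ G) : DifferentiableAt ℝ f z :=
  (hf.contDiffAt (hG.mem_nhds hz)).differentiableAt (by simp)

/-- If `u` is a `C^∞` solution of `Δu = e^{2u}` on a domain `G`, then the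
Schwarzian quantity `2[u_{zz} − (u_z)²]` is holomorphic on `G`. -/
theorem schwarzian_of_metric_holomorphic (G : Set ℂ) (hG : IsOpen G)
    (hGc : IsConnected G) (u : ℂ → ℝ) (hu : ContDiffOn ℝ (⊤ : ℕ∞) u G)
    (hliouville : ∀ z ∈ G, lap u z = Real.exp (2 * u z)) :
    DifferentiableOn ℂ
      (fun z => 2 * (wderiv (wderiv (fun w => (u w : ℂ))) z -
        (wderiv (fun w => (u w : ℂ)) z) ^ 2)) G := by
  set uc : ℂ → ℂ := fun w => (u w : ℂ) with huc
  set F : ℂ → ℂ →L[ℝ] ℂ := fderiv ℝ uc with hF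
  set A : ℂ → ℂ := fun y => (F y 1 - Complex.I * F y Complex.I) / 2 with hA
  set FA : ℂ → ℂ →L[ℝ] ℂ := fderiv ℝ A with hFA
  set h : ℂ → ℂ := fun y => Complex.exp (2 * uc y) with hh
  set SS : ℂ → ℂ :=
    fun y => 2 * ((FA y 1 - Complex.I * FA y Complex.I) / 2 - A y * A y) with hSS
  have hucc : ContDiffOn ℝ (⊤ : ℕ∞) uc G := Complex.ofRealCLM.contDiff.comp_contDiffOn hu
  have hFc : ContDiffOn ℝ (⊤ : ℕ∞) F G := by
    rw [hF]; exact hucc.fderiv_of_isOpen hG (by simp)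
  have hAc : ContDiffOn ℝ (⊤ : ℕ∞) A G := by
    rw [hA]
    exact ((hFc.clm_apply contDiffOn_const).sub
      (contDiffOn_const.mul (hFc.clm_apply contDiffOn_const))).div_const 2
  have hFAc : ContDiffOn ℝ (⊤ : ℕ∞) FA G := by
    rw [hFA]; exact hAc.fderiv_of_isOpen hG (by simp)
  have hucd : ∀ y ∈ G, DifferentiableAt ℝ uc y := fun y hy => hucc.diffAt hG hy
  have hFd : ∀ y ∈ G, DifferentiableAt ℝ F y := fun y hy => hFc.diffAt hG hy
  have hAd : ∀ y ∈ G, DifferentiableAt ℝ A y := fun y hy => hAc.diffAt hG hy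
  have hFAd : ∀ y ∈ G, DifferentiableAt ℝ FA y := fun y hy => hFAc.diffAt hG hy
  have hwA : ∀ y ∈ G, wderiv uc y = A y := by
    intro y hy
    rw [wderiv_eq (hucd y hy), hA, ← hF]
  -- key identity : ∂̄ of ∂u equals e^{2u}/4 (times 2)
  have key : ∀ y ∈ G, FA y 1 + Complex.I * FA y Complex.I = h y / 2 := by
    intro y hy
    have hDF := hFd y hy
    have h1 : HasFDerivAt (fun w => F w 1) ((fderiv ℝ F y).flip 1) y :=
      hasFDerivAt_clm_apply_const hDF
    have hI : HasFDerivAt (fun w => F w Complex.I) ((fderiv ℝ F y).flip Complex.I) y :=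
      hasFDerivAt_clm_apply_const hDF
    have hAder : HasFDerivAt A ((2 : ℂ)⁻¹ • ((fderiv ℝ F y).flip 1
        - Complex.I • (fderiv ℝ F y).flip Complex.I)) y :=
      (h1.sub (hI.const_mul Complex.I)).div_const' 2
    have hFAy := hAder.fderiv
    have sym : fderiv ℝ F y 1 Complex.I = fderiv ℝ F y Complex.I 1 := by
      have hsy := ((hucc.contDiffAt (hG.mem_nhds hy)).of_le (WithTop.coe_le_coe.mpr le_top)).isSymmSndFDerivAt
        (n := 2) (by norm_num)
      have := hsy 1 Complex.I
      rwa [← hF] at this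
    have lapf : fderiv ℝ F y 1 1 + fderiv ℝ F y Complex.I Complex.I = h y := by
      have hl := lap_eq hG hu hy
      rw [hliouville y hy, ← hF] at hl
      rw [← hl, hh]
      push_cast [Complex.ofReal_exp]
      rfl
    rw [hFA, hFAy]
    simp only [ContinuousLinearMap.smul_apply, ContinuousLinearMap.sub_apply,
      ContinuousLinearMap.flip_apply, smul_eq_mul]
    linear_combination (-(Complex.I) / 2) * sym + (1 / 2 : ℂ) * lapf
      - ((fderiv ℝ F y Complex.I Complex.I) / 2) * Complex.I_sq
  intro z hz
  -- SS is complex-differentiable at z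
  have hCRdiff : DifferentiableAt ℂ SS z := by
    have hDFA := hFAd z hz
    have h1 : HasFDerivAt (fun y => FA y 1) ((fderiv ℝ FA z).flip 1) z :=
      hasFDerivAt_clm_apply_const hDFA
    have hI : HasFDerivAt (fun y => FA y Complex.I) ((fderiv ℝ FA z).flip Complex.I) z :=
      hasFDerivAt_clm_apply_const hDFA
    have hA2 : HasFDerivAt (fun y => A y * A y) (A z • fderiv ℝ A z + A z • fderiv ℝ A z) z :=
      (hAd z hz).hasFDerivAt.mul (hAd z hz).hasFDerivAt
    have hSSder : HasFDerivAt SS ((2 : ℂ) • (((2 : ℂ)⁻¹ • ((fderiv ℝ FA z).flip 1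
        - Complex.I • (fderiv ℝ FA z).flip Complex.I))
        - (A z • fderiv ℝ A z + A z • fderiv ℝ A z))) z :=
      (((h1.sub (hI.const_mul Complex.I)).div_const' 2).sub hA2).const_mul 2
    apply differentiableAt_complex_of_cr hSSder.differentiableAt
    rw [hSSder.fderiv]
    -- scalar identities
    have sym2 : fderiv ℝ FA z 1 Complex.I = fderiv ℝ FA z Complex.I 1 := by
      have hsy := ((hAc.contDiffAt (hG.mem_nhds hz)).of_le (WithTop.coe_le_coe.mpr le_top)).isSymmSndFDerivAt
        (n := 2) (by norm_num)
      have := hsy 1 Complex.I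
      rwa [← hFA] at this
    have keyz := key z hz
    have hhd : HasFDerivAt (fun y => h y / 2)
        ((2 : ℂ)⁻¹ • (Complex.exp (2 * uc z) • ((2 : ℂ) • fderiv ℝ uc z))) z := by
      exact (((hucd z hz).hasFDerivAt.const_mul 2).cexp).div_const' 2
    have hsum : HasFDerivAt (fun y => FA y 1 + Complex.I * FA y Complex.I)
        ((fderiv ℝ FA z).flip 1 + Complex.I • (fderiv ℝ FA z).flip Complex.I) z :=
      h1.add (hI.const_mul Complex.I)
    have heq : (fun y => FA y 1 + Complex.I * FA y Complex.I) =ᶠ[nhds z]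
        (fun y => h y / 2) := by
      filter_upwards [hG.eventually_mem hz] with w hw using key w hw
    have hU := (hhd.congr_of_eventuallyEq heq).unique hsum
    have C1 : h z * fderiv ℝ uc z 1
        = fderiv ℝ FA z 1 1 + Complex.I * fderiv ℝ FA z 1 Complex.I := by
      have := congrArg (fun (L : ℂ →L[ℝ] ℂ) => L 1) hU
      simp only [ContinuousLinearMap.smul_apply, ContinuousLinearMap.add_apply,
        ContinuousLinearMap.flip_apply, smul_eq_mul, hh] at this ⊢
      linear_combination this
    have C2 : h z * fderiv ℝ uc z Complex.I
        = fderiv ℝ FA z Complex.I 1 + Complex.I * fderiv ℝ FA z Complex.I Complex.I := by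
      have := congrArg (fun (L : ℂ →L[ℝ] ℂ) => L Complex.I) hU
      simp only [ContinuousLinearMap.smul_apply, ContinuousLinearMap.add_apply,
        ContinuousLinearMap.flip_apply, smul_eq_mul, hh] at this ⊢
      linear_combination this
    have hAz : A z = (fderiv ℝ uc z 1 - Complex.I * fderiv ℝ uc z Complex.I) / 2 := by
      rw [hA, ← hF]
    have hFAz : fderiv ℝ A z 1 + Complex.I * fderiv ℝ A z Complex.I = h z / 2 := by
      rw [← hFA]; exact keyz
    simp only [ContinuousLinearMap.smul_apply, ContinuousLinearMap.sub_apply,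
      ContinuousLinearMap.add_apply, ContinuousLinearMap.flip_apply, smul_eq_mul]
    linear_combination Complex.I * C1 + C2 - 2 * sym2
      + (4 * Complex.I * A z) * hFAz + (2 * Complex.I * h z) * hAz
      + (2 * fderiv ℝ FA z 1 Complex.I - 4 * A z * fderiv ℝ A z Complex.I
          - h z * F z Complex.I) * Complex.I_sq
  -- transfer to the original function
  have heqS : (fun y => 2 * (wderiv (wderiv uc) y - (wderiv uc y) ^ 2)) =ᶠ[nhds z] SS := by
    filter_upwards [hG.eventually_mem hz] with y hy
    have e1 : wderiv uc =ᶠ[nhds y] A := by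
      filter_upwards [hG.eventually_mem hy] with w hw using hwA w hw
    rw [wderiv_congr e1, wderiv_eq (hAd y hy), hwA y hy, hSS, ← hFA]
    ring
  exact ((heqS.differentiableAt_iff).mpr hCRdiff).differentiableWithinAt
end

section
/- For a nonnegative bounded function c : G → ℝ on a domain G and u : G → ℝ of class C² with Δu ≥ c(z)·u in G: if u attains a non-negative maximum at some interior point of G, then u is constant. -/
open Filter Metric Set



lemma contDiffAt_nhds {f : ℝ → ℝ} (h : ContDiffAt ℝ 2 f 0) :
    ∃ U : Set ℝ, IsOpen U ∧ (0:ℝ) ∈ U ∧ ContDiffOn ℝ 2 f U := by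
  obtain ⟨u, hu, hfu⟩ := h.contDiffOn (m := 2) le_rfl (by norm_num)
  obtain ⟨U, hUu, hU, h0⟩ := _root_.mem_nhds_iff.mp hu
  exact ⟨U, hU, h0, hfu.mono hUu⟩

lemma itd2_add {F P : ℝ → ℝ} (hF : ContDiffAt ℝ 2 F 0) (hP : ContDiffAt ℝ 2 P 0) :
    iteratedDeriv 2 (fun t => F t + P t) 0 = iteratedDeriv 2 F 0 + iteratedDeriv 2 P 0 := by
  obtain ⟨U, hU, h0U, hFU⟩ := contDiffAt_nhds hF
  obtain ⟨V, hV, h0V, hPV⟩ := contDiffAt_nhds hP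
  have hWo : IsOpen (U ∩ V) := hU.inter hV
  have h0W : (0:ℝ) ∈ U ∩ V := ⟨h0U, h0V⟩
  have hdF : ∀ t ∈ U, DifferentiableAt ℝ F t := fun t ht =>
    (hFU.differentiableOn (by norm_num)).differentiableAt (hU.mem_nhds ht)
  have hdP : ∀ t ∈ V, DifferentiableAt ℝ P t := fun t ht =>
    (hPV.differentiableOn (by norm_num)).differentiableAt (hV.mem_nhds ht)
  have ev : deriv (fun t => F t + P t) =ᶠ[nhds (0:ℝ)] fun t => deriv F t + deriv P t := by
    filter_upwards [hWo.mem_nhds h0W] with t ht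
    exact deriv_add (hdF t ht.1) (hdP t ht.2)
  have hdF2 : DifferentiableAt ℝ (deriv F) 0 :=
    ((hFU.deriv_of_isOpen (m := 1) hU (by norm_num)).differentiableOn (by norm_num)).differentiableAt
      (hU.mem_nhds h0U)
  have hdP2 : DifferentiableAt ℝ (deriv P) 0 :=
    ((hPV.deriv_of_isOpen (m := 1) hV (by norm_num)).differentiableOn (by norm_num)).differentiableAt
      (hV.mem_nhds h0V)
  have e2 : iteratedDeriv 2 (fun t => F t + P t) 0 = deriv (deriv (fun t => F t + P t)) 0 := by
    rw [show (2:ℕ) = 1 + 1 from rfl, iteratedDeriv_succ, iteratedDeriv_one]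
  have e3 : iteratedDeriv 2 F 0 = deriv (deriv F) 0 := by
    rw [show (2:ℕ) = 1 + 1 from rfl, iteratedDeriv_succ, iteratedDeriv_one]
  have e4 : iteratedDeriv 2 P 0 = deriv (deriv P) 0 := by
    rw [show (2:ℕ) = 1 + 1 from rfl, iteratedDeriv_succ, iteratedDeriv_one]
  rw [e2, e3, e4, ev.deriv_eq, deriv_fun_add hdF2 hdP2]

lemma second_deriv_test {f : ℝ → ℝ} (hf : ContDiffAt ℝ 2 f 0) (hm : IsLocalMax f 0) :
    iteratedDeriv 2 f 0 ≤ 0 := by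
  by_contra hpos
  push_neg at hpos
  obtain ⟨U, hU, h0U, hfU⟩ := contDiffAt_nhds hf
  have e3 : iteratedDeriv 2 f 0 = deriv (deriv f) 0 := by
    rw [show (2:ℕ) = 1 + 1 from rfl, iteratedDeriv_succ, iteratedDeriv_one]
  rw [e3] at hpos
  have hd0 : deriv f 0 = 0 := hm.deriv_eq_zero
  have hdf2 : DifferentiableAt ℝ (deriv f) 0 :=
    ((hfU.deriv_of_isOpen (m := 1) hU (by norm_num)).differentiableOn (by norm_num)).differentiableAt
      (hU.mem_nhds h0U)
  have hds : HasDerivAt (deriv f) (deriv (deriv f) 0) 0 := hdf2.hasDerivAt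
  -- slope of deriv f tends to positive limit
  have hslope := (hasDerivAt_iff_tendsto_slope.mp hds)
  have hev : ∀ᶠ t in nhdsWithin (0:ℝ) (Set.Ioi 0), 0 < deriv f t := by
    have h1 : ∀ᶠ t in nhdsWithin (0:ℝ) ({(0:ℝ)}ᶜ), 0 < slope (deriv f) 0 t := by
      simpa using hslope.eventually (eventually_gt_nhds hpos)
    have h2 : nhdsWithin (0:ℝ) (Set.Ioi 0) ≤ nhdsWithin (0:ℝ) ({(0:ℝ)}ᶜ) := by
      apply nhdsWithin_mono
      intro t ht
      exact ne_of_gt ht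
    filter_upwards [h2 h1, self_mem_nhdsWithin] with t ht ht'
    have htpos : (0:ℝ) < t := ht'
    have hts : slope (deriv f) 0 t = deriv f t / t := by
      rw [slope_def_field, hd0]; simp
    rw [hts] at ht
    have hmul := mul_pos ht htpos
    rwa [div_mul_cancel₀ _ htpos.ne'] at hmul
  obtain ⟨d2, hd2, hIoo⟩ := mem_nhdsGT_iff_exists_Ioo_subset.mp hev
  have hnb : {t : ℝ | t ∈ U ∧ f t ≤ f 0} ∈ nhds (0:ℝ) :=
    Filter.inter_mem (hU.mem_nhds h0U) hm
  obtain ⟨d1, hd1pos, hball⟩ := Metric.mem_nhds_iff.mp hnb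
  set δ := min d1 d2 / 2 with hδ
  have hmin : 0 < min d1 d2 := lt_min hd1pos hd2
  have hδpos : 0 < δ := by simp only [hδ]; linarith
  have hδd1 : δ < d1 := by
    have : min d1 d2 ≤ d1 := min_le_left _ _
    simp only [hδ]; linarith
  have hδd2 : δ < d2 := by
    have : min d1 d2 ≤ d2 := min_le_right _ _
    simp only [hδ]; linarith [hd2]
  have hsub : Set.Icc (0:ℝ) δ ⊆ Metric.ball 0 d1 := by
    intro t ht
    simp only [Metric.mem_ball, Real.dist_eq, sub_zero]
    rw [abs_of_nonneg ht.1]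
    linarith [ht.2]
  have hmono : StrictMonoOn f (Set.Icc 0 δ) := by
    apply strictMonoOn_of_deriv_pos (convex_Icc 0 δ)
    · apply (hfU.continuousOn).mono
      intro t ht
      exact (hball (hsub ht)).1
    · intro t ht
      rw [interior_Icc] at ht
      exact hIoo ⟨ht.1, lt_trans ht.2 hδd2⟩
  have hlt : f 0 < f δ := hmono (Set.left_mem_Icc.mpr hδpos.le) (Set.right_mem_Icc.mpr hδpos.le) hδpos
  have : f δ ≤ f 0 := by
    refine (hball ?_).2
    simp only [Metric.mem_ball, Real.dist_eq, sub_zero]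
    rw [abs_of_nonneg hδpos.le]; exact hδd1
  linarith



lemma itd2_eq {f g : ℝ → ℝ} {s : ℝ} (h1 : ∀ t, HasDerivAt f (g t) t) (h2 : HasDerivAt g s 0) :
    iteratedDeriv 2 f 0 = s := by
  have hdf : deriv f = g := funext fun t => (h1 t).deriv
  have h3 : iteratedDeriv 2 f = deriv (deriv f) := by
    rw [show (2:ℕ) = 1 + 1 from rfl, iteratedDeriv_succ, iteratedDeriv_one]
  rw [h3, hdf]; exact h2.deriv

lemma gauss_hasDeriv (α a b : ℝ) (t : ℝ) :
    HasDerivAt (fun s : ℝ => Real.exp (-(α * ((a + s)^2 + b))))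
      (Real.exp (-(α * ((a + t)^2 + b))) * (-(α * (2 * (a + t))))) t := by
  have h0 : HasDerivAt (fun s : ℝ => (a + s)^2) (2*(a+t)) t := by
    simpa using ((hasDerivAt_id t).const_add a).fun_pow 2
  have h1 : HasDerivAt (fun s : ℝ => (a + s)^2 + b) (2*(a+t)) t := h0.add_const b
  have h2 := (h1.const_mul α).neg
  simpa [mul_comm] using h2.exp

lemma expo_hasDeriv (β x : ℝ) (t : ℝ) :
    HasDerivAt (fun s : ℝ => Real.exp (β * (x + s))) (Real.exp (β * (x + t)) * β) t := by
  simpa using (((hasDerivAt_id t).const_add x).const_mul β).exp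

lemma Pseg_hasDeriv (ε η m α β a b x Cr : ℝ) (t : ℝ) :
    HasDerivAt (fun s : ℝ => ε * (Real.exp (-(α * ((a + s)^2 + b))) - Cr)
        + η * Real.exp (β * (x + s)) - m)
      (ε * (Real.exp (-(α * ((a + t)^2 + b))) * (-(α * (2 * (a + t)))))
        + η * (Real.exp (β * (x + t)) * β)) t := by
  exact ((((gauss_hasDeriv α a b t).sub_const Cr).const_mul ε).add
    ((expo_hasDeriv β x t).const_mul η)).sub_const m

lemma Pseg_itd2 (ε η m α β a b x Cr : ℝ) :
    iteratedDeriv 2 (fun s : ℝ => ε * (Real.exp (-(α * ((a + s)^2 + b))) - Cr)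
        + η * Real.exp (β * (x + s)) - m) 0
      = ε * ((4*α^2*a^2 - 2*α) * Real.exp (-(α * (a^2 + b))))
        + η * (β^2 * Real.exp (β * x)) := by
  refine itd2_eq (Pseg_hasDeriv ε η m α β a b x Cr) ?_
  have hl : HasDerivAt (fun t : ℝ => -(α * (2 * (a + t)))) (-(α * 2)) 0 := by
    simpa using (((hasDerivAt_id (0:ℝ)).const_add a).const_mul 2 |>.const_mul α).fun_neg
  have h1 := ((gauss_hasDeriv α a b 0).fun_mul hl).const_mul ε
  have h2 := ((expo_hasDeriv β x 0).mul_const β).const_mul η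
  have h3 := h1.fun_add h2
  refine h3.congr_deriv ?_
  simp only [add_zero]
  ring

lemma Pseg_contDiffAt (ε η m α β a b x Cr : ℝ) :
    ContDiffAt ℝ 2 (fun s : ℝ => ε * (Real.exp (-(α * ((a + s)^2 + b))) - Cr)
        + η * Real.exp (β * (x + s)) - m) 0 := by
  apply ContDiff.contDiffAt
  fun_prop

lemma deriv_nonneg_of_right_max {g : ℝ → ℝ} {d r0 r : ℝ} (hr : r0 < r)
    (hmax : ∀ t ∈ Set.Ioo r0 r, g t ≤ g r) (hd : HasDerivAt g d r) : 0 ≤ d := by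
  have hw : HasDerivWithinAt g d (Set.Iio r) r := hd.hasDerivWithinAt
  have hslope := hasDerivWithinAt_iff_tendsto_slope.mp hw
  have heq : Set.Iio r \ {r} = Set.Iio r := by
    ext t; simp only [Set.mem_diff, Set.mem_Iio, Set.mem_singleton_iff]
    exact ⟨fun h => h.1, fun h => ⟨h, ne_of_lt h⟩⟩
  rw [heq] at hslope
  have hmem : Set.Ioo r0 r ∈ nhdsWithin r (Set.Iio r) :=
    Ioo_mem_nhdsLT_of_mem ⟨hr, le_rfl⟩
  have hev : ∀ᶠ t in nhdsWithin r (Set.Iio r), 0 ≤ slope g r t := by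
    filter_upwards [hmem] with t ht
    rw [slope_def_field]
    apply div_nonneg_iff.mpr
    exact Or.inr ⟨by linarith [hmax t ht], by linarith [ht.2]⟩
  exact ge_of_tendsto hslope hev


set_option maxHeartbeats 2000000 in
/-- Hopf-type maximum principle: if `c ≥ 0` is bounded on the domain `G`,
`u` is `C²` with `Δu ≥ c·u` on `G`, and `u` attains a non-negative maximum at
an interior point, then `u` is constant. -/
theorem hopf_maximum_principle (G : Set ℂ) (hG : IsOpen G)
    (hGc : IsConnected G) (c : ℂ → ℝ) (hc : ∀ z ∈ G, 0 ≤ c z)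
    (hcbd : ∃ M : ℝ, ∀ z ∈ G, c z ≤ M)
    (u : ℂ → ℝ) (hu : ContDiffOn ℝ 2 u G)
    (hineq : ∀ z ∈ G, c z * u z ≤ lap u z)
    (z₀ : ℂ) (hz₀ : z₀ ∈ G) (hnn : 0 ≤ u z₀)
    (hmax : ∀ z ∈ G, u z ≤ u z₀) :
    ∀ z ∈ G, u z = u z₀ := by
  obtain ⟨M₀, hM₀⟩ := hcbd
  set m := u z₀ with hm
  clear_value m
  set M := max M₀ 0 with hMdef
  have hM : ∀ z ∈ G, c z ≤ M := fun z hz => le_trans (hM₀ z hz) (by rw [hMdef]; exact le_max_left _ _)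
  have hMnn : 0 ≤ M := by rw [hMdef]; exact le_max_right _ _
  clear_value M
  have hcont : ContinuousOn u G := hu.continuousOn
  intro z hz
  by_contra hzne
  have hult : u z < m := lt_of_le_of_ne (hmax z hz) hzne
  set N : Set ℂ := G ∩ u ⁻¹' (Set.Iio m) with hNdef
  have hNopen : IsOpen N := hcont.isOpen_inter_preimage hG isOpen_Iio
  have hzN : z ∈ N := ⟨hz, hult⟩
  -- find a max point in the closure of N
  have hp : ∃ p ∈ G, u p = m ∧ p ∈ closure N := by
    by_contra hnp
    push_neg at hnp
    obtain ⟨q, hqG, hqN, hqV⟩ := hGc.isPreconnected N (closure N)ᶜ hNopen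
      isClosed_closure.isOpen_compl
      (fun x hx => by
        rcases lt_or_eq_of_le (hmax x hx) with h | h
        · exact Or.inl ⟨hx, h⟩
        · exact Or.inr (hnp x hx h))
      ⟨z, hz, hzN⟩ ⟨z₀, hz₀, hnp z₀ hz₀ hm.symm⟩
    exact hqV (subset_closure hqN)
  obtain ⟨p, hpG, hpu, hpcl⟩ := hp
  -- a closed ball around p inside G
  obtain ⟨δ₀, hδ₀pos, hδ₀sub⟩ := Metric.isOpen_iff.mp hG p hpG
  set δ := δ₀ / 2 with hδdef
  clear_value δ
  have hδpos : 0 < δ := by rw [hδdef]; positivity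
  have hsub : Metric.closedBall p δ ⊆ G := by
    intro x hx
    apply hδ₀sub
    rw [Metric.mem_closedBall] at hx
    rw [Metric.mem_ball]
    have hh : δ = δ₀/2 := hδdef
    linarith
  -- a point of N close to p
  obtain ⟨w', hw'N, hw'd⟩ := Metric.mem_closure_iff.mp hpcl (δ/4) (by positivity)
  have hw'G : w' ∈ G := hw'N.1
  have hw'u : u w' < m := hw'N.2
  -- the compact set where u = m inside the ball
  set K : Set ℂ := Metric.closedBall p δ ∩ u ⁻¹' {m} with hKdef
  have hKclosed : IsClosed K :=
    ContinuousOn.preimage_isClosed_of_isClosed (hcont.mono hsub)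
      Metric.isClosed_closedBall isClosed_singleton
  have hKcomp : IsCompact K :=
    (isCompact_closedBall p δ).of_isClosed_subset hKclosed Set.inter_subset_left
  have hpK : p ∈ K := ⟨Metric.mem_closedBall_self hδpos.le, hpu⟩
  obtain ⟨p₁, hp₁K, hp₁d⟩ := hKcomp.exists_infDist_eq_dist ⟨p, hpK⟩ w'
  set r := Metric.infDist w' K with hrdef
  clear_value r
  have hp₁u : u p₁ = m := hp₁K.2
  have hrpos : 0 < r := by
    rw [hp₁d, dist_pos]
    intro h
    rw [h] at hw'u
    exact absurd hp₁u (ne_of_lt hw'u)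
  have hrd : dist w' p₁ = r := hp₁d.symm
  have hrsmall : r < δ/4 := by
    have h1 : r ≤ dist w' p := by rw [hrdef]; exact Metric.infDist_le_dist_of_mem hpK
    have h2 : dist w' p = dist p w' := dist_comm _ _
    calc r ≤ dist p w' := by rw [← h2]; exact h1
    _ < δ/4 := hw'd
  -- basic geometry
  have hballG : ∀ x : ℂ, dist x w' ≤ r → x ∈ Metric.closedBall p δ := by
    intro x hx
    have : dist x p ≤ dist x w' + dist w' p := dist_triangle x w' p
    have h2 : dist w' p < δ/4 := by rw [dist_comm]; exact hw'd
    simp only [Metric.mem_closedBall]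
    linarith
  have hballG' : ∀ x : ℂ, dist x w' ≤ r → x ∈ G := fun x hx => hsub (hballG x hx)
  have hballN : ∀ x : ℂ, dist x w' < r → u x < m := by
    intro x hx
    rcases lt_or_eq_of_le (hmax x (hballG' x hx.le)) with h | h
    · exact h
    · exfalso
      have hxK : x ∈ K := ⟨hballG x hx.le, h⟩
      have h9 := Metric.infDist_le_dist_of_mem (x := w') hxK
      rw [← hrdef, dist_comm] at h9
      linarith
  have hp₁G : p₁ ∈ G := hballG' p₁ (by rw [dist_comm]; exact hrd.le)
  -- the annulus
  set A : Set ℂ := Metric.closedBall w' r \ Metric.ball w' (r/2) with hAdef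
  have hAG : A ⊆ G := fun x hx => hballG' x hx.1
  have hAcomp : IsCompact A := (isCompact_closedBall w' r).diff Metric.isOpen_ball
  have hp₁A : p₁ ∈ A := by
    constructor
    · simp only [Metric.mem_closedBall]; rw [dist_comm]; exact hrd.le
    · simp only [Metric.mem_ball, not_lt]
      rw [dist_comm]; rw [hrd]; linarith
  -- constants
  set α : ℝ := max 1 ((4+M)/r^2) with hαdef
  have hα1 : 1 ≤ α := by rw [hαdef]; exact le_max_left _ _
  have hα0 : 0 < α := lt_of_lt_of_le one_pos hα1
  have hαr : 4 + M ≤ α * r^2 := by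
    have h1 : (4+M)/r^2 ≤ α := by rw [hαdef]; exact le_max_right _ _
    have h2 : 0 < r^2 := by positivity
    calc 4 + M = ((4+M)/r^2) * r^2 := by field_simp
    _ ≤ α * r^2 := by nlinarith
  clear_value α
  set β : ℝ := Real.sqrt (M+1) with hβdef
  have hβsq : β^2 = M+1 := by rw [hβdef]; exact Real.sq_sqrt (by linarith)
  have hβ0 : 0 ≤ β := by rw [hβdef]; exact Real.sqrt_nonneg _
  clear_value β
  -- barrier functions
  set H : ℂ → ℝ := fun x =>
    Real.exp (-(α * ((x.re - w'.re)^2 + (x.im - w'.im)^2))) - Real.exp (-(α * r^2)) with hHdef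
  clear_value H
  set Eb : ℂ → ℝ := fun x => Real.exp (β * x.re) with hEdef
  clear_value Eb
  have hco : ∀ x : ℂ, (x.re - w'.re)^2 + (x.im - w'.im)^2 = dist x w' ^ 2 := by
    intro x
    rw [Complex.dist_eq, Complex.sq_norm, Complex.normSq_apply]
    simp only [Complex.sub_re, Complex.sub_im]
    ring
  -- choose ε from the inner sphere
  have hsphG : Metric.sphere w' (r/2) ⊆ G := fun x hx =>
    hballG' x (by rw [mem_sphere_iff_norm] at hx; rw [dist_eq_norm, hx]; linarith)
  obtain ⟨y₀, hy₀s, hy₀max⟩ := (isCompact_sphere w' (r/2)).exists_isMaxOn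
    (NormedSpace.sphere_nonempty.mpr (by positivity)) (hcont.mono hsphG)
  set ε := m - u y₀ with hεdef
  have hεpos : 0 < ε := by
    have : u y₀ < m := hballN y₀ (by
      rw [mem_sphere_iff_norm] at hy₀s
      rw [dist_eq_norm, hy₀s]; linarith)
    simp only [hεdef]; linarith
  have hεub : ∀ y ∈ Metric.sphere w' (r/2), u y ≤ m - ε := by
    intro y hy
    have := hy₀max hy
    simp only [hεdef]
    simp only [Set.mem_setOf_eq] at this
    linarith [this]
  clear_value ε
  set v : ℂ → ℝ := fun x => u x - m + ε * H x with hvdef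
  clear_value v
  -- KEY CLAIM : v ≤ 0 on the annulus
  have hkey : ∀ x ∈ A, v x ≤ 0 := by
    by_contra hcon
    push_neg at hcon
    obtain ⟨z₁, hz₁A, hz₁pos⟩ := hcon
    set C : ℝ := Real.exp (β * (w'.re + r)) with hCdef
    clear_value C
    have hCpos : 0 < C := by rw [hCdef]; exact Real.exp_pos _
    have hEle : ∀ x ∈ A, Eb x ≤ C := by
      intro x hx
      have h1 : x.re - w'.re ≤ dist x w' := by
        have h2 := Complex.abs_re_le_norm (x - w')
        rw [Complex.dist_eq]
        have h3 : (x - w').re = x.re - w'.re := by simp [Complex.sub_re]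
        rw [← h3]
        exact le_trans (le_abs_self _) h2
      have h2 : dist x w' ≤ r := hx.1
      simp only [hEdef, hCdef]
      apply Real.exp_le_exp.mpr
      nlinarith [hβ0]
    have hEpos : ∀ x : ℂ, 0 < Eb x := fun x => by rw [hEdef]; exact Real.exp_pos _
    set η : ℝ := v z₁ / (2*C) with hηdef
    clear_value η
    have hηpos : 0 < η := by rw [hηdef]; exact div_pos hz₁pos (by linarith)
    set wf : ℂ → ℝ := fun x => v x + η * Eb x with hwfdef
    clear_value wf
    have hwfcont : ContinuousOn wf A := by
      simp only [hwfdef, hvdef]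
      apply ContinuousOn.add
      · apply ContinuousOn.add
        · exact (hcont.mono hAG).sub continuousOn_const
        · apply ContinuousOn.mul continuousOn_const
          apply Continuous.continuousOn
          simp only [hHdef]
          fun_prop
      · apply ContinuousOn.mul continuousOn_const
        apply Continuous.continuousOn
        simp only [hEdef]
        fun_prop
    obtain ⟨q, hqA, hqmax⟩ := hAcomp.exists_isMaxOn ⟨z₁, hz₁A⟩ hwfcont
    have hq1 : wf z₁ ≤ wf q := hqmax hz₁A
    have hwfz₁ : v z₁ < wf z₁ := by
      have := hEpos z₁
      simp only [hwfdef]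
      nlinarith
    have hηC : η * C = v z₁ / 2 := by
      rw [hηdef]
      field_simp
    have hqd1 : dist q w' ≤ r := hqA.1
    have hqd2 : r/2 ≤ dist q w' := by
      have h2 := hqA.2
      rw [Metric.mem_ball] at h2
      linarith [not_lt.mp h2]
    have hH1 : ∀ x : ℂ, H x ≤ 1 := by
      intro x
      simp only [hHdef]
      have h0 : -(α * ((x.re - w'.re)^2 + (x.im - w'.im)^2)) ≤ 0 := by
        nlinarith [sq_nonneg (x.re - w'.re), sq_nonneg (x.im - w'.im), hα0]
      have h1 : Real.exp (-(α * ((x.re - w'.re)^2 + (x.im - w'.im)^2))) ≤ 1 :=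
        Real.exp_le_one_iff.mpr h0
      have h2 : 0 < Real.exp (-(α * r^2)) := Real.exp_pos _
      linarith
    have hcontra : ¬ (v q ≤ 0) := by
      intro hvq
      have h5 : wf q ≤ v z₁ / 2 := by
        have h6 := hEle q hqA
        have h7 : η * Eb q ≤ η * C := by nlinarith
        simp only [hwfdef]
        linarith [hηC]
      have h8 : wf z₁ ≤ wf q := hq1
      linarith
    have houter : dist q w' ≠ r := by
      intro h
      apply hcontra
      have hHq : H q = 0 := by
        simp only [hHdef]
        rw [hco q, h]
        ring
      simp only [hvdef]
      rw [hHq]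
      have := hmax q (hAG hqA)
      linarith
    have hinner : dist q w' ≠ r/2 := by
      intro h
      apply hcontra
      have hus : u q ≤ m - ε := hεub q (Metric.mem_sphere.mpr h)
      have h6 := hH1 q
      simp only [hvdef]
      nlinarith
    have hqlt : dist q w' < r := lt_of_le_of_ne hqd1 houter
    have hqgt : r/2 < dist q w' := lt_of_le_of_ne hqd2 (Ne.symm hinner)
    have hqG : q ∈ G := hAG hqA
    have hwfqpos : 0 < wf q := lt_of_lt_of_le (lt_trans hz₁pos hwfz₁) hq1
    have hlm : IsLocalMax wf q := by
      have hAno : IsOpen (Metric.ball w' r \ Metric.closedBall w' (r/2)) :=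
        Metric.isOpen_ball.sdiff Metric.isClosed_closedBall
      have hqin : q ∈ Metric.ball w' r \ Metric.closedBall w' (r/2) :=
        ⟨Metric.mem_ball.mpr hqlt, fun hh => absurd (Metric.mem_closedBall.mp hh) (not_le.mpr hqgt)⟩
      apply Filter.eventually_of_mem (hAno.mem_nhds hqin)
      intro x hx
      exact hqmax ⟨Metric.ball_subset_closedBall hx.1,
        fun hb => hx.2 (Metric.ball_subset_closedBall hb)⟩
    -- pointwise second derivative contradiction at q
    have hucd : ContDiffAt ℝ 2 u q := hu.contDiffAt (hG.mem_nhds hqG)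
    have hmap1 : ContDiff ℝ 2 (fun t : ℝ => q + (t:ℂ)) := by
      apply ContDiff.add contDiff_const
      exact Complex.ofRealCLM.contDiff
    have hmap2 : ContDiff ℝ 2 (fun t : ℝ => q + (t:ℂ) * Complex.I) := by
      apply ContDiff.add contDiff_const
      exact Complex.ofRealCLM.contDiff.mul contDiff_const
    have hF1cd : ContDiffAt ℝ 2 (fun t : ℝ => u (q + (t:ℂ))) 0 := by
      have h := ContDiffAt.comp (f := fun t : ℝ => q + (t:ℂ)) 0
        (by simpa using hucd) hmap1.contDiffAt
      exact h
    have hF2cd : ContDiffAt ℝ 2 (fun t : ℝ => u (q + (t:ℂ) * Complex.I)) 0 := by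
      have h := ContDiffAt.comp (f := fun t : ℝ => q + (t:ℂ) * Complex.I) 0
        (by simpa using hucd) hmap2.contDiffAt
      exact h
    have htend1 : Filter.Tendsto (fun t : ℝ => q + (t:ℂ)) (nhds 0) (nhds q) := by
      have h := (hmap1.continuous).tendsto (0:ℝ)
      simpa using h
    have htend2 : Filter.Tendsto (fun t : ℝ => q + (t:ℂ) * Complex.I) (nhds 0) (nhds q) := by
      have h := (hmap2.continuous).tendsto (0:ℝ)
      simpa using h
    have hlm1 : IsLocalMax (fun t : ℝ => wf (q + (t:ℂ))) 0 := by
      have h := htend1.eventually hlm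
      unfold IsLocalMax IsMaxFilter
      simpa using h
    have hlm2 : IsLocalMax (fun t : ℝ => wf (q + (t:ℂ) * Complex.I)) 0 := by
      have h := htend2.eventually hlm
      unfold IsLocalMax IsMaxFilter
      simpa using h
    have hP1cd := Pseg_contDiffAt ε η m α β (q.re - w'.re) ((q.im - w'.im)^2) q.re (Real.exp (-(α * r^2)))
    have hP2cd := Pseg_contDiffAt ε (η * Real.exp (β * q.re)) m α 0 (q.im - w'.im) ((q.re - w'.re)^2) 0 (Real.exp (-(α * r^2)))
    have he1 : (fun t : ℝ => wf (q + (t:ℂ)))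
        = fun t : ℝ => u (q + (t:ℂ)) + (ε * (Real.exp (-(α * ((q.re - w'.re + t)^2 + (q.im - w'.im)^2))) - Real.exp (-(α * r^2))) + η * Real.exp (β * (q.re + t)) - m) := by
      funext t
      simp only [hwfdef, hvdef, hHdef, hEdef, Complex.add_re, Complex.add_im,
        Complex.ofReal_re, Complex.ofReal_im, add_zero]
      ring_nf
    have he2 : (fun t : ℝ => wf (q + (t:ℂ) * Complex.I))
        = fun t : ℝ => u (q + (t:ℂ) * Complex.I) + (ε * (Real.exp (-(α * ((q.im - w'.im + t)^2 + (q.re - w'.re)^2))) - Real.exp (-(α * r^2))) + (η * Real.exp (β * q.re)) * Real.exp (0 * (0 + t)) - m) := by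
      funext t
      simp only [hwfdef, hvdef, hHdef, hEdef, Complex.add_re, Complex.add_im,
        Complex.mul_re, Complex.mul_im, Complex.I_re, Complex.I_im,
        Complex.ofReal_re, Complex.ofReal_im, mul_zero, mul_one, zero_mul, sub_zero,
        add_zero, zero_add, Real.exp_zero]
      ring_nf
    have htest1 : iteratedDeriv 2 (fun t : ℝ => u (q + (t:ℂ)) + (ε * (Real.exp (-(α * ((q.re - w'.re + t)^2 + (q.im - w'.im)^2))) - Real.exp (-(α * r^2))) + η * Real.exp (β * (q.re + t)) - m)) 0 ≤ 0 := by
      apply second_deriv_test (hF1cd.add hP1cd)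
      rw [← he1]; exact hlm1
    have htest2 : iteratedDeriv 2
        (fun t : ℝ => u (q + (t:ℂ) * Complex.I) + (ε * (Real.exp (-(α * ((q.im - w'.im + t)^2 + (q.re - w'.re)^2))) - Real.exp (-(α * r^2))) + (η * Real.exp (β * q.re)) * Real.exp (0 * (0 + t)) - m)) 0 ≤ 0 := by
      apply second_deriv_test (hF2cd.add hP2cd)
      rw [← he2]; exact hlm2
    have f1 : iteratedDeriv 2 (fun t : ℝ => u (q + (t:ℂ))) 0 + (ε * ((4*α^2*(q.re - w'.re)^2 - 2*α) * Real.exp (-(α * ((q.re - w'.re)^2 + (q.im - w'.im)^2)))) + η * (β^2 * Real.exp (β * q.re))) ≤ 0 := by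
      have hh := itd2_add hF1cd hP1cd
      rw [hh, Pseg_itd2] at htest1
      exact htest1
    have f2 : iteratedDeriv 2 (fun t : ℝ => u (q + (t:ℂ) * Complex.I)) 0 + (ε * ((4*α^2*(q.im - w'.im)^2 - 2*α) * Real.exp (-(α * ((q.im - w'.im)^2 + (q.re - w'.re)^2)))) + (η * Real.exp (β * q.re)) * (0^2 * Real.exp (0 * 0))) ≤ 0 := by
      have hh := itd2_add hF2cd hP2cd
      rw [hh, Pseg_itd2] at htest2
      exact htest2
    have hexp2 : (Real.exp (-(α * ((q.im - w'.im)^2 + (q.re - w'.re)^2)))) = (Real.exp (-(α * ((q.re - w'.re)^2 + (q.im - w'.im)^2)))) := by ring_nf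
    have f2' : iteratedDeriv 2 (fun t : ℝ => u (q + (t:ℂ) * Complex.I)) 0
        + ε * ((4*α^2*(q.im - w'.im)^2 - 2*α) * Real.exp (-(α * ((q.re - w'.re)^2 + (q.im - w'.im)^2)))) ≤ 0 := by
      have h0 : (η * Real.exp (β * q.re)) * ((0:ℝ)^2 * Real.exp ((0:ℝ) * 0)) = 0 := by norm_num
      rw [hexp2, h0, add_zero] at f2
      exact f2
    have f1' : iteratedDeriv 2 (fun t : ℝ => u (q + (t:ℂ))) 0
        + (ε * ((4*α^2*(q.re - w'.re)^2 - 2*α) * Real.exp (-(α * ((q.re - w'.re)^2 + (q.im - w'.im)^2)))) + η * ((M+1) * Real.exp (β * q.re))) ≤ 0 := by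
      rw [hβsq] at f1
      exact f1
    have hCq : c q * u q ≤ iteratedDeriv 2 (fun t : ℝ => u (q + (t:ℂ))) 0
        + iteratedDeriv 2 (fun t : ℝ => u (q + (t:ℂ) * Complex.I)) 0 := hineq q hqG
    have hρ : r^2/4 ≤ (q.re - w'.re)^2 + (q.im - w'.im)^2 := by
      rw [hco q]
      have h1 : (r/2)^2 ≤ dist q w' ^ 2 := by
        apply pow_le_pow_left₀ (by linarith) hqgt.le
      linarith
    have h4 : M ≤ 4*α^2*((q.re - w'.re)^2 + (q.im - w'.im)^2) - 4*α := by
      have k1 : 0 ≤ α * (α * r^2 - (4+M)) := mul_nonneg hα0.le (by linarith)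
      have k2 : 0 ≤ M * (α - 1) := mul_nonneg hMnn (by linarith)
      have k3 : 0 ≤ 4*α^2 * (((q.re - w'.re)^2 + (q.im - w'.im)^2) - r^2/4) :=
        mul_nonneg (by positivity) (by linarith)
      linarith [k1, k2, k3]
    have e1 : (0:ℝ) < Real.exp (-(α * ((q.re - w'.re)^2 + (q.im - w'.im)^2))) := Real.exp_pos _
    have e2 : (0:ℝ) < Real.exp (-(α * r^2)) := Real.exp_pos _
    have s2 : c q * ((Real.exp (-(α * ((q.re - w'.re)^2 + (q.im - w'.im)^2)))) - (Real.exp (-(α * r^2))))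
        ≤ (4*α^2*(q.re - w'.re)^2 - 2*α) * Real.exp (-(α * ((q.re - w'.re)^2 + (q.im - w'.im)^2))) + (4*α^2*(q.im - w'.im)^2 - 2*α) * Real.exp (-(α * ((q.re - w'.re)^2 + (q.im - w'.im)^2))) := by
      linarith [mul_le_mul_of_nonneg_right (hM q hqG) e1.le,
        mul_le_mul_of_nonneg_right h4 e1.le, mul_nonneg (hc q hqG) e2.le]
    have s4 := mul_le_mul_of_nonneg_left s2 hεpos.le
    have s5 : η * (c q * Real.exp (β * q.re)) ≤ η * (M * Real.exp (β * q.re)) :=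
      mul_le_mul_of_nonneg_left
        (mul_le_mul_of_nonneg_right (hM q hqG) (Real.exp_pos _).le) hηpos.le
    have hwfqval : wf q = u q - m + ε * ((Real.exp (-(α * ((q.re - w'.re)^2 + (q.im - w'.im)^2)))) - (Real.exp (-(α * r^2)))) + η * Real.exp (β * q.re) := by
      simp only [hwfdef, hvdef, hHdef, hEdef]
    have s7 : 0 ≤ c q * (u q + ε * ((Real.exp (-(α * ((q.re - w'.re)^2 + (q.im - w'.im)^2)))) - (Real.exp (-(α * r^2)))) + η * Real.exp (β * q.re)) := by
      apply mul_nonneg (hc q hqG)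
      have hrw : u q + ε * ((Real.exp (-(α * ((q.re - w'.re)^2 + (q.im - w'.im)^2)))) - (Real.exp (-(α * r^2)))) + η * Real.exp (β * q.re) = wf q + m := by
        rw [hwfqval]; ring
      rw [hrw]
      linarith [hwfqpos, hnn]
    have hEbqpos : 0 < η * Real.exp (β * q.re) := mul_pos hηpos (Real.exp_pos _)
    linarith [f1', f2', hCq, s4, s5, s7, hEbqpos]
  -- Final Hopf derivative contradiction at p₁
  set ν : ℂ := (r:ℂ)⁻¹ * (p₁ - w') with hνdef
  have habsp : ‖p₁ - w'‖ = r := by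
    rw [← Complex.dist_eq, dist_comm]
    exact hrd
  have hνabs : ‖ν‖ = 1 := by
    rw [hνdef, norm_mul, norm_inv, Complex.norm_real, Real.norm_eq_abs, abs_of_pos hrpos, habsp]
    field_simp
  clear_value ν
  have hνsq : ν.re^2 + ν.im^2 = 1 := by
    have h1 : Complex.normSq ν = 1 := by
      rw [← Complex.sq_norm, hνabs]; norm_num
    rw [Complex.normSq_apply] at h1
    nlinarith [h1]
  have hφr : w' + (r:ℝ) • ν = p₁ := by
    rw [hνdef, Complex.real_smul]
    have hr0 : (r:ℂ) ≠ 0 := by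
      simp only [ne_eq, Complex.ofReal_eq_zero]
      exact hrpos.ne'
    field_simp
    ring
  have hp₁lm : IsLocalMax u p₁ := by
    apply Filter.eventually_of_mem (hG.mem_nhds hp₁G)
    intro x hx
    rw [hp₁u]
    exact hmax x hx
  have hudiff : DifferentiableAt ℝ u p₁ :=
    (hu.contDiffAt (hG.mem_nhds hp₁G)).differentiableAt (by norm_num)
  have hfzero : fderiv ℝ u p₁ = 0 := hp₁lm.hasFDerivAt_eq_zero hudiff.hasFDerivAt
  have hφd : HasDerivAt (fun t : ℝ => w' + t • ν) ν r := by
    simpa using ((hasDerivAt_id r).smul_const ν).const_add w'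
  have hud : HasDerivAt (fun t : ℝ => u (w' + t • ν)) 0 r := by
    have hf' : HasFDerivAt u (fderiv ℝ u p₁) (w' + (r:ℝ) • ν) := by
      rw [hφr]
      exact hudiff.hasFDerivAt
    have h := hf'.comp_hasDerivAt r hφd
    rw [hfzero] at h
    simpa [Function.comp_def] using h
  have hHφ : (fun t : ℝ => H (w' + t • ν))
      = fun t : ℝ => Real.exp (-(α * ((0 + t)^2 + 0))) - Real.exp (-(α * r^2)) := by
    funext t
    rw [hHdef]
    simp only [Complex.add_re, Complex.add_im, Complex.real_smul, Complex.mul_re,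
      Complex.mul_im, Complex.ofReal_re, Complex.ofReal_im, zero_mul, sub_zero, add_zero,
      zero_add, mul_zero]
    congr 2
    linear_combination (-(α * t^2)) * hνsq
  have hHφd : HasDerivAt (fun t : ℝ => H (w' + t • ν))
      (Real.exp (-(α * ((0 + r)^2 + 0))) * (-(α * (2 * (0 + r))))) r := by
    rw [hHφ]
    exact (gauss_hasDeriv α 0 0 r).sub_const _
  have hgd : HasDerivAt (fun t : ℝ => v (w' + t • ν))
      (0 - 0 + ε * (Real.exp (-(α * ((0 + r)^2 + 0))) * (-(α * (2 * (0 + r)))))) r := by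
    have hfun : (fun t : ℝ => v (w' + t • ν))
        = fun t : ℝ => u (w' + t • ν) - m + ε * H (w' + t • ν) := by
      funext t; rw [hvdef]
    rw [hfun]
    exact (hud.sub (hasDerivAt_const r m)).add (hHφd.const_mul ε)
  have hHp₁ : H p₁ = 0 := by
    rw [hHdef]
    simp only []
    rw [hco p₁, dist_comm, hrd]
    ring
  have hgmax : ∀ t ∈ Set.Ioo (r/2) r,
      v (w' + t • ν) ≤ v (w' + (r:ℝ) • ν) := by
    intro t ht
    have htpos : 0 < t := lt_trans (by linarith) ht.1
    have hdist : dist (w' + t • ν) w' = t := by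
      rw [dist_eq_norm]
      have h1 : w' + t • ν - w' = t • ν := by ring
      rw [h1, norm_smul]
      simp only [Real.norm_eq_abs, abs_of_pos htpos]
      rw [hνabs, mul_one]
    have htA : (w' + t • ν) ∈ A := by
      constructor
      · rw [Metric.mem_closedBall, hdist]; linarith [ht.2]
      · rw [Metric.mem_ball, hdist]; push_neg; linarith [ht.1]
    have h1 := hkey _ htA
    have h2 : v (w' + (r:ℝ) • ν) = 0 := by
      rw [hφr, hvdef]
      simp only []
      rw [hp₁u, hHp₁]
      ring
    rw [h2]
    exact h1
  have hd0 := deriv_nonneg_of_right_max (half_lt_self hrpos) hgmax hgd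
  have hexpos : 0 < Real.exp (-(α * ((0 + r)^2 + 0))) := Real.exp_pos _
  nlinarith [hd0, mul_pos (mul_pos hεpos hexpos) (mul_pos hα0 hrpos)]
end
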